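/- arXiv:1112.2115 — 3 statements merged into one kernel-verified Lean document; each statement's English description precedes it below -/
import Mathlib

section
/- Let B be a board and let D be a saturated domino covering of B. Consider the graph with vertex set B whose edges are the dominoes of D. Then the vertex set of every connected component of this graph is a fragment; in particular, the connected components yield a partition of B into pairwise disjoint fragments. -/
/-- A cell of the square grid. -/
abbrev Cell : Type := ℤ × ℤ

/-- Two cells are adjacent iff they differ by 1 in exactly one coordinate. -/
def Adj (p q : Cell) : Prop := |p.1 - q.1| + |p.2 - q.2| = 1

/-- A board: a finite nonempty set of cells, each adjacent to another cell of the board. -/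
def IsBoard (B : Set Cell) : Prop :=
  B.Finite ∧ B.Nonempty ∧ ∀ p ∈ B, ∃ q ∈ B, Adj p q

/-- A domino of `B`: a two-element subset of `B` whose cells are adjacent. -/
def IsDomino (B : Set Cell) (e : Finset Cell) : Prop :=
  ∃ p q : Cell, p ∈ B ∧ q ∈ B ∧ Adj p q ∧ e = {p, q}

/-- A domino covering of `B`: a finite set of dominoes of `B` whose union is `B`. -/
def IsDominoCovering (B : Set Cell) (D : Finset (Finset Cell)) : Prop :=
  (∀ e ∈ D, IsDomino B e) ∧ (⋃ e ∈ D, (↑e : Set Cell)) = B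

/-- A saturated domino covering: removing any domino leaves some cell uncovered. -/
def IsSaturatedCovering (B : Set Cell) (D : Finset (Finset Cell)) : Prop :=
  IsDominoCovering B D ∧ ∀ e ∈ D, (⋃ e' ∈ D.erase e, (↑e' : Set Cell)) ⊂ B

/-- `dNum B` is the maximum number of dominoes in a saturated domino covering of `B`. -/
noncomputable def dNum (B : Set Cell) : ℕ :=
  sSup {k : ℕ | ∃ D : Finset (Finset Cell), IsSaturatedCovering B D ∧ D.card = k}

/-- The X-pentomino centered at `c`: the cell `c` together with its four adjacent cells. -/
def Xpent (c : Cell) : Set Cell :=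
  {c, (c.1 + 1, c.2), (c.1 - 1, c.2), (c.1, c.2 + 1), (c.1, c.2 - 1)}

/-- A set of cells is connected under adjacency. -/
def ConnectedUnderAdj (F : Set Cell) : Prop :=
  ∀ p ∈ F, ∀ q ∈ F, Relation.ReflTransGen (fun a b => a ∈ F ∧ b ∈ F ∧ Adj a b) p q

/-- A fragment: a connected subset of some X-pentomino with at least two cells. -/
def IsFragment (F : Set Cell) : Prop :=
  (∃ c : Cell, F ⊆ Xpent c) ∧ 2 ≤ F.ncard ∧ ConnectedUnderAdj F

/-- A fragment tiling of `B`: a partition of `B` into pairwise disjoint fragments. -/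
def IsFragmentTiling (B : Set Cell) (T : Finset (Set Cell)) : Prop :=
  (∀ F ∈ T, IsFragment F) ∧
  (∀ F ∈ T, ∀ G ∈ T, F ≠ G → Disjoint F G) ∧
  (⋃ F ∈ T, F) = B

/-- `fNum B` is the minimum number of fragments in a fragment tiling of `B`. -/
noncomputable def fNum (B : Set Cell) : ℕ :=
  sInf {k : ℕ | ∃ T : Finset (Set Cell), IsFragmentTiling B T ∧ T.card = k}

/-- `xNum B` is the minimum number of X-pentominoes (centered anywhere, allowed to
overlap and to extend outside `B`) whose union covers `B`. -/
noncomputable def xNum (B : Set Cell) : ℕ :=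
  sInf {k : ℕ | ∃ C : Finset Cell, B ⊆ (⋃ c ∈ C, Xpent c) ∧ C.card = k}

/-- The relation linking two cells joined by a domino of `D`. -/
def DominoRel (D : Finset (Finset Cell)) (a b : Cell) : Prop :=
  ({a, b} : Finset Cell) ∈ D

/-- The connected component of `p` in the graph on the board whose edges are the
dominoes of `D`. -/
def Component (D : Finset (Finset Cell)) (p : Cell) : Set Cell :=
  {q : Cell | Relation.ReflTransGen (DominoRel D) p q}

/-! Saturation gives every domino of `D` a private cell, covered by no other domino. Let `{x, y}`
be a domino with `y` private. Walking from `x` along dominoes never leaves the dominoes at `x`: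
for a domino `{x, r}`, either `r` is private, so `{x, r}` is the only domino at `r`, or `x` is
private, so `{x, r} = {x, y}` and `r = y`. Thus the component of `x` is a star centred at `x`,
which lies in the X-pentomino centred at `x`. -/

lemma Adj.symm {p q : Cell} (h : Adj p q) : Adj q p := by
  rwa [Adj, abs_sub_comm q.1, abs_sub_comm q.2]

lemma Adj.ne {p q : Cell} (h : Adj p q) : p ≠ q := by
  rintro rfl
  simp [Adj] at h

lemma mem_xpent_of_adj {p q : Cell} (h : Adj p q) : q ∈ Xpent p := by
  obtain ⟨a, b⟩ := p
  obtain ⟨x, y⟩ := q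
  simp only [Adj] at h
  simp only [Xpent, Set.mem_insert_iff, Set.mem_singleton_iff, Prod.mk.injEq]
  rcases abs_cases (a - x) with ⟨_, _⟩ | ⟨_, _⟩ <;>
    rcases abs_cases (b - y) with ⟨_, _⟩ | ⟨_, _⟩ <;> omega

lemma finite_xpent (c : Cell) : (Xpent c).Finite := by
  simp only [Xpent]
  exact Set.toFinite _

section Component

variable {D : Finset (Finset Cell)}

instance (D : Finset (Finset Cell)) : Std.Symm (DominoRel D) where
  symm a b h := by rwa [DominoRel, Finset.pair_comm]

lemma mem_component_self (p : Cell) : p ∈ Component D p :=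
  Relation.ReflTransGen.refl

lemma mem_component_of_mem_pair {x y p : Cell} (hxy : ({x, y} : Finset Cell) ∈ D)
    (hp : p ∈ ({x, y} : Finset Cell)) : p ∈ Component D x := by
  rcases Finset.mem_insert.mp hp with rfl | hp
  · exact mem_component_self p
  · exact Finset.mem_singleton.mp hp ▸ Relation.ReflTransGen.single hxy

lemma component_eq_of_mem {p q : Cell} (h : q ∈ Component D p) :
    Component D q = Component D p := by
  ext r
  exact ⟨(h.trans ·), (Std.Symm.symm _ _ h).trans⟩

lemma component_eq_or_disjoint (D : Finset (Finset Cell)) (p q : Cell) :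
    Component D p = Component D q ∨ Disjoint (Component D p) (Component D q) := by
  refine or_iff_not_imp_right.mpr fun h => ?_
  obtain ⟨r, hrp, hrq⟩ := Set.not_disjoint_iff.mp h
  rw [← component_eq_of_mem hrp, component_eq_of_mem hrq]

end Component

section Covering

variable {B : Set Cell} {D : Finset (Finset Cell)}

lemma IsDominoCovering.mem_and_adj (hD : IsDominoCovering B D) {a b : Cell}
    (h : ({a, b} : Finset Cell) ∈ D) : a ∈ B ∧ b ∈ B ∧ Adj a b := by
  obtain ⟨p, q, hp, hq, hpq, he⟩ := hD.1 _ h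
  have : ({a, b} : Set Cell) = {p, q} := by rw [← Finset.coe_pair, he, Finset.coe_pair]
  rcases Set.pair_eq_pair_iff.mp this with ⟨rfl, rfl⟩ | ⟨rfl, rfl⟩
  · exact ⟨hp, hq, hpq⟩
  · exact ⟨hq, hp, hpq.symm⟩

lemma IsDominoCovering.exists_mem_of_mem (hD : IsDominoCovering B D) {p : Cell} (hp : p ∈ B) :
    ∃ e ∈ D, p ∈ e := by
  rw [← hD.2] at hp
  simpa using hp

lemma IsDominoCovering.component_subset (hD : IsDominoCovering B D) {p : Cell} (hp : p ∈ B) :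
    Component D p ⊆ B := by
  intro q hq
  induction hq with
  | refl => exact hp
  | tail _ h _ => exact (hD.mem_and_adj h).2.1

lemma IsDominoCovering.connectedUnderAdj_component (hD : IsDominoCovering B D) (p : Cell) :
    ConnectedUnderAdj (Component D p) := by
  let R := fun a b => a ∈ Component D p ∧ b ∈ Component D p ∧ Adj a b
  have : Std.Symm R := ⟨fun _ _ h => ⟨h.2.1, h.1, h.2.2.symm⟩⟩
  have hfrom : ∀ q ∈ Component D p, Relation.ReflTransGen R p q := by
    intro q hq
    induction hq with
    | refl => exact .refl
    | @tail b c hpb h ih => exact ih.tail ⟨hpb, hpb.tail h, (hD.mem_and_adj h).2.2⟩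
  intro a ha b hb
  exact (Std.Symm.symm _ _ (hfrom a ha)).trans (hfrom b hb)

end Covering

section Saturated

variable {B : Set Cell} {D : Finset (Finset Cell)}

lemma IsSaturatedCovering.exists_private_mem (hD : IsSaturatedCovering B D) {e : Finset Cell}
    (he : e ∈ D) : ∃ x ∈ e, ∀ e' ∈ D, x ∈ e' → e' = e := by
  obtain ⟨x, hxB, hx⟩ := Set.exists_of_ssubset (hD.2 e he)
  simp only [Set.mem_iUnion, Finset.mem_erase, Finset.mem_coe, not_exists] at hx
  have hprivate : ∀ e' ∈ D, x ∈ e' → e' = e := fun e' he' hxe' =>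
    not_not.mp fun hne => hx e' ⟨hne, he'⟩ hxe'
  obtain ⟨e', he', hxe'⟩ := hD.1.exists_mem_of_mem hxB
  exact ⟨x, hprivate e' he' hxe' ▸ hxe', hprivate⟩

lemma IsSaturatedCovering.exists_eq_pair_private (hD : IsSaturatedCovering B D)
    {e : Finset Cell} (he : e ∈ D) :
    ∃ x y : Cell, e = {x, y} ∧ ∀ e' ∈ D, y ∈ e' → e' = e := by
  obtain ⟨p, q, -, -, -, rfl⟩ := hD.1.1 e he
  obtain ⟨z, hz, hprivate⟩ := hD.exists_private_mem he
  rcases Finset.mem_insert.mp hz with rfl | hz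
  · exact ⟨q, z, Finset.pair_comm _ _, hprivate⟩
  · exact ⟨p, q, rfl, Finset.mem_singleton.mp hz ▸ hprivate⟩

lemma IsSaturatedCovering.component_subset_star (hD : IsSaturatedCovering B D) {x y : Cell}
    (hxy : ({x, y} : Finset Cell) ∈ D) (hy : ∀ e ∈ D, y ∈ e → e = {x, y}) :
    ∀ r ∈ Component D x, r = x ∨ ({x, r} : Finset Cell) ∈ D := by
  intro r hr
  induction hr with
  | refl => exact .inl rfl
  | @tail r s _ hrs ih =>
    rcases ih with rfl | hxr
    · exact .inr hrs
    obtain ⟨z, hz, hprivate⟩ := hD.exists_private_mem hxr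
    have mem_of_eq_pair {a b : Cell} (h : ({r, s} : Finset Cell) = {a, b}) : s = a ∨ s = b := by
      have hs : s ∈ ({r, s} : Finset Cell) := by simp
      simpa [h] using hs
    rcases Finset.mem_insert.mp hz with hzx | hzr
    · rw [hzx] at hprivate
      have hr : r ∈ ({x, y} : Finset Cell) := by
        rw [hprivate _ hxy (Finset.mem_insert_self _ _)]; simp
      rcases Finset.mem_insert.mp hr with rfl | hry
      · exact .inr hrs
      rw [Finset.mem_singleton.mp hry] at hrs mem_of_eq_pair
      rcases mem_of_eq_pair (hy _ hrs (Finset.mem_insert_self _ _)) with rfl | rfl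
      · exact .inl rfl
      · exact .inr hxy
    · rw [Finset.mem_singleton.mp hzr] at hprivate
      rcases mem_of_eq_pair (hprivate _ hrs (Finset.mem_insert_self _ _)) with rfl | rfl
      · exact .inl rfl
      · exact .inr hxr

lemma IsSaturatedCovering.isFragment_component (hD : IsSaturatedCovering B D) {x y : Cell}
    (hxy : ({x, y} : Finset Cell) ∈ D) (hy : ∀ e ∈ D, y ∈ e → e = {x, y}) :
    IsFragment (Component D x) := by
  have hsub : Component D x ⊆ Xpent x := fun r hr => by
    rcases hD.component_subset_star hxy hy r hr with rfl | hxr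
    · exact Set.mem_insert r _
    · exact mem_xpent_of_adj (hD.1.mem_and_adj hxr).2.2
  have hpair : ({x, y} : Set Cell) ⊆ Component D x :=
    Set.insert_subset (mem_component_self x) (Set.singleton_subset_iff.mpr (.single hxy))
  refine ⟨⟨x, hsub⟩, ?_, hD.1.connectedUnderAdj_component x⟩
  calc 2 = ({x, y} : Set Cell).ncard := (Set.ncard_pair (hD.1.mem_and_adj hxy).2.2.ne).symm
    _ ≤ (Component D x).ncard := Set.ncard_le_ncard hpair ((finite_xpent x).subset hsub)

end Saturated

theorem saturated_covering_components_are_fragments_general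
    (B : Set Cell) (D : Finset (Finset Cell))
    (hD : IsSaturatedCovering B D) :
    (∀ p ∈ B, IsFragment (Component D p)) ∧
    (∀ p ∈ B, ∀ q ∈ B, Component D p = Component D q ∨
      Disjoint (Component D p) (Component D q)) ∧
    (⋃ p ∈ B, Component D p) = B := by
  refine ⟨fun p hp => ?_, fun p _ q _ => component_eq_or_disjoint D p q, ?_⟩
  · obtain ⟨e, he, hpe⟩ := hD.1.exists_mem_of_mem hp
    obtain ⟨x, y, rfl, hy⟩ := hD.exists_eq_pair_private he
    rw [component_eq_of_mem (mem_component_of_mem_pair he hpe)]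
    exact hD.isFragment_component he hy
  · refine (Set.iUnion₂_subset fun p hp => ?_).antisymm fun p hp => ?_
    · exact hD.1.component_subset hp
    · exact Set.mem_iUnion₂.mpr ⟨p, hp, mem_component_self p⟩

/-- For a saturated domino covering `D` of a board `B`, every connected
component of the graph whose edges are the dominoes of `D` is a fragment; in particular,
the components yield a partition of `B` into pairwise disjoint fragments. -/
theorem saturated_covering_components_are_fragments
    (B : Set Cell) (hB : IsBoard B) (D : Finset (Finset Cell))
    (hD : IsSaturatedCovering B D) :
    (∀ p ∈ B, IsFragment (Component D p)) ∧
    (∀ p ∈ B, ∀ q ∈ B, Component D p = Component D q ∨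
      Disjoint (Component D p) (Component D q)) ∧
    (⋃ p ∈ B, Component D p) = B :=
  saturated_covering_components_are_fragments_general B D hD
end

section
/- If F is a fragment and c is a cell of ℤ × ℤ with c ∉ F that is adjacent to some cell of F, then either F ∪ {c} is a fragment, or there exist two disjoint fragments G₁ and G₂ with G₁ ∪ G₂ = F ∪ {c}. -/
/-!
No two arms of an X-pentomino are adjacent, so a connected set of at least two cells inside
`Xpent x` must contain `x`; conversely any such set containing `x` is connected as a star
around `x`. Hence the fragments are exactly the sets `F ⊆ Xpent x` with `x ∈ F` and at least
two cells. Let `c` be adjacent to `p ∈ F`. If `c ∈ Xpent x`, then `F ∪ {c}` is a fragment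
centred at `x`. Otherwise `p ≠ x`; if `F = {x, p}`, then `F ∪ {c}` is a fragment centred at `p`,
and if `F` has a third cell, then `F \ {p}` (still centred at `x`) and the domino `{p, c}` split
`F ∪ {c}`.
-/

lemma adj_iff (p q : Cell) : Adj p q ↔
    (p.1 = q.1 ∧ (p.2 = q.2 + 1 ∨ q.2 = p.2 + 1)) ∨
    (p.2 = q.2 ∧ (p.1 = q.1 + 1 ∨ q.1 = p.1 + 1)) := by
  unfold Adj
  rcases abs_cases (p.1 - q.1) with ⟨h1, _⟩ | ⟨h1, _⟩ <;>
    rcases abs_cases (p.2 - q.2) with ⟨h2, _⟩ | ⟨h2, _⟩ <;> omega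

lemma mem_xpent_iff {x p : Cell} : p ∈ Xpent x ↔ p = x ∨ Adj p x := by
  simp only [Xpent, Set.mem_insert_iff, Set.mem_singleton_iff, Prod.ext_iff, adj_iff]
  omega

lemma self_mem_xpent (x : Cell) : x ∈ Xpent x :=
  mem_xpent_iff.2 (Or.inl rfl)

lemma Adj.mem_xpent {p x : Cell} (h : Adj p x) : p ∈ Xpent x :=
  mem_xpent_iff.2 (Or.inr h)

lemma adj_of_mem_xpent_of_ne {x p : Cell} (hp : p ∈ Xpent x) (hne : p ≠ x) : Adj p x :=
  (mem_xpent_iff.1 hp).resolve_left hne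

lemma xpent_finite (x : Cell) : (Xpent x).Finite := by
  simp only [Xpent, Set.finite_insert, Set.finite_singleton]

lemma eq_center_or_eq_center_of_adj {x a b : Cell} (ha : a ∈ Xpent x) (hb : b ∈ Xpent x)
    (h : Adj a b) : a = x ∨ b = x := by
  simp only [mem_xpent_iff, adj_iff, Prod.ext_iff] at ha hb h ⊢
  omega

lemma connectedUnderAdj_of_center_mem {G : Set Cell} {x : Cell} (hx : x ∈ G)
    (hG : G ⊆ Xpent x) : ConnectedUnderAdj G := by
  have to_center : ∀ r ∈ G, Relation.ReflTransGen (fun a b => a ∈ G ∧ b ∈ G ∧ Adj a b) r x := by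
    intro r hr
    rcases eq_or_ne r x with rfl | hne
    · exact .refl
    · exact .single ⟨hr, hx, adj_of_mem_xpent_of_ne (hG hr) hne⟩
  intro p hp q hq
  refine (to_center p hp).trans ?_
  rcases eq_or_ne q x with rfl | hne
  · exact .refl
  · exact .single ⟨hx, hq, (adj_of_mem_xpent_of_ne (hG hq) hne).symm⟩

lemma center_mem_of_connectedUnderAdj {F : Set Cell} {x : Cell} (hsub : F ⊆ Xpent x)
    (hcard : 2 ≤ F.ncard) (hconn : ConnectedUnderAdj F) : x ∈ F := by
  obtain ⟨a, b, ha, hb, hab⟩ :=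
    (Set.one_lt_ncard_iff ((xpent_finite x).subset hsub)).1 hcard
  rcases (hconn a ha b hb).cases_head with rfl | ⟨m, ⟨ha', hm, hadj⟩, _⟩
  · exact absurd rfl hab
  · rcases eq_center_or_eq_center_of_adj (hsub ha') (hsub hm) hadj with rfl | rfl
    exacts [ha', hm]

lemma isFragment_iff {F : Set Cell} :
    IsFragment F ↔ ∃ x ∈ F, F ⊆ Xpent x ∧ 2 ≤ F.ncard := by
  constructor
  · rintro ⟨⟨x, hsub⟩, hcard, hconn⟩
    exact ⟨x, center_mem_of_connectedUnderAdj hsub hcard hconn, hsub, hcard⟩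
  · rintro ⟨x, hx, hsub, hcard⟩
    exact ⟨⟨x, hsub⟩, hcard, connectedUnderAdj_of_center_mem hx hsub⟩

lemma isFragment_pair {a b : Cell} (h : Adj a b) : IsFragment {a, b} := by
  refine isFragment_iff.2 ⟨a, Set.mem_insert a {b}, ?_, (Set.ncard_pair h.ne).ge⟩
  exact Set.insert_subset (self_mem_xpent a) (Set.singleton_subset_iff.2 h.symm.mem_xpent)

lemma isFragment_union_singleton_of_subset {F : Set Cell} {x c : Cell} (hx : x ∈ F)
    (hcard : 2 ≤ F.ncard) (hF : F ⊆ Xpent x) (hc : c ∈ Xpent x) : IsFragment (F ∪ {c}) := by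
  have hfin : (F ∪ {c}).Finite := ((xpent_finite x).subset hF).union (Set.finite_singleton c)
  exact isFragment_iff.2 ⟨x, Or.inl hx, Set.union_subset hF (Set.singleton_subset_iff.2 hc),
    hcard.trans (Set.ncard_le_ncard Set.subset_union_left hfin)⟩

lemma isFragment_diff_singleton {F : Set Cell} {x p q : Cell} (hx : x ∈ F) (hF : F ⊆ Xpent x)
    (hq : q ∈ F) (hpx : p ≠ x) (hqx : q ≠ x) (hqp : q ≠ p) : IsFragment (F \ {p}) := by
  have hx' : x ∈ F \ {p} := ⟨hx, hpx.symm⟩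
  refine isFragment_iff.2 ⟨x, hx', Set.sdiff_subset.trans hF, ?_⟩
  exact (Set.one_lt_ncard_iff (((xpent_finite x).subset hF).sdiff)).2
    ⟨x, q, hx', ⟨hq, hqp⟩, hqx.symm⟩

lemma diff_singleton_union_pair {F : Set Cell} {p c : Cell} (hp : p ∈ F) :
    F \ {p} ∪ {p, c} = F ∪ {c} := by
  ext z
  by_cases hz : z = p <;> simp_all

lemma disjoint_diff_singleton_pair {F : Set Cell} {p c : Cell} (hc : c ∉ F) :
    Disjoint (F \ {p}) {p, c} := by
  rw [Set.disjoint_insert_right, Set.disjoint_singleton_right]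
  exact ⟨fun h => h.2 rfl, fun h => hc h.1⟩

/-- A fragment together with an adjacent extra cell can be replaced by a
single fragment or by two disjoint fragments covering the same set of cells. -/
theorem fragment_absorbs_adjacent_cell (F : Set Cell) (c : Cell)
    (hF : IsFragment F) (hc : c ∉ F) (hadj : ∃ p ∈ F, Adj c p) :
    IsFragment (F ∪ {c}) ∨
      ∃ G₁ G₂ : Set Cell, IsFragment G₁ ∧ IsFragment G₂ ∧ Disjoint G₁ G₂ ∧
        G₁ ∪ G₂ = F ∪ {c} := by
  obtain ⟨x, hx, hsub, hcard⟩ := isFragment_iff.1 hF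
  obtain ⟨p, hp, hcp⟩ := hadj
  by_cases hcx : c ∈ Xpent x
  · exact .inl (isFragment_union_singleton_of_subset hx hcard hsub hcx)
  have hpx : p ≠ x := by rintro rfl; exact hcx hcp.mem_xpent
  by_cases hFxp : F ⊆ {x, p}
  · have hsub' : F ⊆ Xpent p := hFxp.trans <| Set.insert_subset
      (adj_of_mem_xpent_of_ne (hsub hp) hpx).symm.mem_xpent
      (Set.singleton_subset_iff.2 (self_mem_xpent p))
    exact .inl (isFragment_union_singleton_of_subset hp hcard hsub' hcp.mem_xpent)
  obtain ⟨q, hq, hqxp⟩ := Set.not_subset.1 hFxp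
  simp only [Set.mem_insert_iff, Set.mem_singleton_iff, not_or] at hqxp
  exact .inr ⟨F \ {p}, {p, c}, isFragment_diff_singleton hx hsub hq hpx hqxp.1 hqxp.2,
    isFragment_pair hcp.symm, disjoint_diff_singleton_pair hc, diff_singleton_union_pair hp⟩
end

section
/- Let G be a finite connected simple graph with at least two vertices. Then the maximum number of edges in a saturated edge covering of G equals |V(G)| − γ(G), where γ(G) is the domination number of G. -/
/-- An edge covering of a simple graph `G`: a set of edges of `G` such that every vertex
is an endpoint of some edge of the set. -/
def IsEdgeCovering {V : Type*} (G : SimpleGraph V) (E' : Finset (Sym2 V)) : Prop :=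
  (↑E' ⊆ G.edgeSet) ∧ ∀ v : V, ∃ e ∈ E', v ∈ e

/-- A saturated edge covering: every edge of the set has an endpoint belonging to no
other edge of the set. -/
def IsSaturatedEdgeCovering {V : Type*} (G : SimpleGraph V) (E' : Finset (Sym2 V)) : Prop :=
  IsEdgeCovering G E' ∧ ∀ e ∈ E', ∃ v : V, v ∈ e ∧ ∀ e' ∈ E', e' ≠ e → v ∉ e'

/-- A dominating set of `G`: every vertex lies in it or is adjacent to one of its
vertices. -/
def IsDominatingSet {V : Type*} (G : SimpleGraph V) (S : Finset V) : Prop :=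
  ∀ v : V, v ∈ S ∨ ∃ u ∈ S, G.Adj u v

/-- The domination number `γ(G)`. -/
noncomputable def dominationNumber (V : Type*) (G : SimpleGraph V) : ℕ :=
  sInf {k : ℕ | ∃ S : Finset V, IsDominatingSet G S ∧ S.card = k}

/-!
The private vertices of a saturated edge covering `E'` are pairwise distinct, and each of them
is adjacent to the other endpoint of its edge, which is not private; so the non-private
vertices dominate and `|E'| + γ(G) ≤ |V|`.

Conversely, when `G` has no isolated vertex some minimum dominating set `S` gives every
`u ∈ S` an external private neighbour (Bollobás–Cockayne). Joining each `v ∉ S` to a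
dominator in `S` then yields a saturated edge covering with `|V| - γ(G)` edges: `v` is private
to its edge, and the external private neighbour of `u` can only be joined to `u`.
-/

section

variable {V : Type*} {G : SimpleGraph V}

lemma dominationNumber_le_card {S : Finset V} (hS : IsDominatingSet G S) :
    dominationNumber V G ≤ S.card :=
  Nat.sInf_le ⟨S, hS, rfl⟩

lemma isDominatingSet_univ [Fintype V] : IsDominatingSet G Finset.univ :=
  fun v => Or.inl (Finset.mem_univ v)

lemma exists_isDominatingSet_card_eq_dominationNumber [Fintype V] :
    ∃ S : Finset V, IsDominatingSet G S ∧ S.card = dominationNumber V G :=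
  Nat.sInf_mem (s := {k | ∃ S : Finset V, IsDominatingSet G S ∧ S.card = k})
    ⟨_, Finset.univ, isDominatingSet_univ, rfl⟩

section PrivateVertices

variable {E' : Finset (Sym2 V)} {p : Sym2 V → V}
  (hp : ∀ e ∈ E', p e ∈ e ∧ ∀ e' ∈ E', e' ≠ e → p e ∉ e')
include hp

lemma injOn_of_private : Set.InjOn p E' := by
  intro e he e' he' hpe
  by_contra hne
  exact (hp e' he').2 e he hne (hpe ▸ (hp e he).1)

lemma isDominatingSet_compl_image_of_private [Fintype V] [DecidableEq V]
    (hE' : ↑E' ⊆ G.edgeSet) : IsDominatingSet G (E'.image p)ᶜ := by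
  intro v
  by_cases hv : v ∈ E'.image p
  · obtain ⟨e, he, rfl⟩ := Finset.mem_image.mp hv
    obtain ⟨w, hew⟩ := Sym2.mem_iff_exists.mp (hp e he).1
    have hadj : G.Adj (p e) w := G.mem_edgeSet.mp (hew ▸ hE' he)
    refine Or.inr ⟨w, Finset.mem_compl.mpr fun hw => ?_, hadj.symm⟩
    obtain ⟨e₁, he₁, rfl⟩ := Finset.mem_image.mp hw
    have hwe : p e₁ ∈ e := hew ▸ Sym2.mem_mk_right _ _
    obtain rfl : e₁ = e := by_contra fun hne => (hp e₁ he₁).2 e he (Ne.symm hne) hwe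
    exact G.irrefl hadj
  · exact Or.inl (Finset.mem_compl.mpr hv)

end PrivateVertices

lemma IsSaturatedEdgeCovering.card_add_dominationNumber_le [Fintype V] {E' : Finset (Sym2 V)}
    (h : IsSaturatedEdgeCovering G E') : E'.card + dominationNumber V G ≤ Fintype.card V := by
  classical
  obtain rfl | ⟨e, -⟩ := E'.eq_empty_or_nonempty
  · simpa using dominationNumber_le_card (G := G) isDominatingSet_univ
  have : Nonempty V := ⟨e.out.1⟩
  choose! p hp using h.2
  have hcard : (E'.image p).card = E'.card := Finset.card_image_of_injOn (injOn_of_private hp)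
  have hdom := dominationNumber_le_card (isDominatingSet_compl_image_of_private hp h.1.1)
  rw [Finset.card_compl, hcard] at hdom
  have := hcard ▸ (E'.image p).card_le_univ
  omega

def IsExternalPrivateNeighbor (G : SimpleGraph V) (S : Finset V) (u x : V) : Prop :=
  x ∉ S ∧ G.Adj u x ∧ ∀ w ∈ S, G.Adj w x → w = u

lemma IsDominatingSet.exists_saturatedEdgeCovering [Fintype V] {S : Finset V}
    (hS : IsDominatingSet G S) (hpriv : ∀ u ∈ S, ∃ x, IsExternalPrivateNeighbor G S u x) :
    ∃ E' : Finset (Sym2 V), IsSaturatedEdgeCovering G E' ∧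
      E'.card = Fintype.card V - S.card := by
  classical
  choose! c hcS hc using fun v (hv : v ∉ S) => (hS v).resolve_left hv
  have hmem : ∀ e ∈ Sᶜ.image fun v => s(v, c v), ∃ v ∉ S, e = s(v, c v) := by
    simp only [Finset.mem_image, Finset.mem_compl]
    rintro e ⟨v, hv, rfl⟩
    exact ⟨v, hv, rfl⟩
  have hc_mem : ∀ v ∉ S, s(v, c v) ∈ Sᶜ.image fun v => s(v, c v) := fun v hv =>
    Finset.mem_image_of_mem _ (Finset.mem_compl.mpr hv)
  refine ⟨Sᶜ.image fun v => s(v, c v), ⟨⟨?_, fun v => ?_⟩, ?_⟩, ?_⟩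
  · intro e he
    obtain ⟨v, hv, rfl⟩ := hmem e he
    exact (hc v hv).symm
  · by_cases hv : v ∈ S
    · obtain ⟨x, hxS, hvx, hx⟩ := hpriv v hv
      refine ⟨_, hc_mem x hxS, ?_⟩
      rw [hx (c x) (hcS x hxS) (hc x hxS)]
      exact Sym2.mem_mk_right _ _
    · exact ⟨_, hc_mem v hv, Sym2.mem_mk_left _ _⟩
  · intro e he
    obtain ⟨v, hv, rfl⟩ := hmem e he
    refine ⟨v, Sym2.mem_mk_left _ _, fun e' he' hne hve' => ?_⟩
    obtain ⟨v', hv', rfl⟩ := hmem e' he'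
    rcases Sym2.mem_iff.mp hve' with rfl | rfl
    · exact hne rfl
    · exact hv (hcS v' hv')
  · rw [Finset.card_image_of_injOn, Finset.card_compl]
    intro v hv v' hv' hvv'
    rcases Sym2.eq_iff.mp hvv' with ⟨h, -⟩ | ⟨h, -⟩
    · exact h
    · exact absurd (h ▸ hcS v' (Finset.mem_compl.mp hv')) (Finset.mem_compl.mp hv)

section Exchange

variable [DecidableEq V] {S : Finset V} {u : V}

lemma IsDominatingSet.dominates_of_ne (hS : IsDominatingSet G S)
    (hno : ∀ x, ¬IsExternalPrivateNeighbor G S u x) {v : V} (hvu : v ≠ u) :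
    v ∈ S.erase u ∨ ∃ s ∈ S.erase u, G.Adj s v := by
  rcases hS v with hv | ⟨s, hs, hsv⟩
  · exact Or.inl (Finset.mem_erase.mpr ⟨hvu, hv⟩)
  by_cases hsu : s = u
  · subst hsu
    by_cases hvS : v ∈ S
    · exact Or.inl (Finset.mem_erase.mpr ⟨hvu, hvS⟩)
    have := hno v
    simp only [IsExternalPrivateNeighbor, not_and, not_forall] at this
    obtain ⟨w, hw, hwv, hws⟩ := this hvS hsv
    exact Or.inr ⟨w, Finset.mem_erase.mpr ⟨hws, hw⟩, hwv⟩
  · exact Or.inr ⟨s, Finset.mem_erase.mpr ⟨hsu, hs⟩, hsv⟩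

lemma IsDominatingSet.erase (hS : IsDominatingSet G S)
    (hno : ∀ x, ¬IsExternalPrivateNeighbor G S u x) {s : V} (hs : s ∈ S) (hsu : G.Adj s u) :
    IsDominatingSet G (S.erase u) := by
  intro v
  by_cases hvu : v = u
  · subst hvu
    exact Or.inr ⟨s, Finset.mem_erase.mpr ⟨G.ne_of_adj hsu, hs⟩, hsu⟩
  · exact hS.dominates_of_ne hno hvu

lemma IsDominatingSet.insert_erase (hS : IsDominatingSet G S)
    (hno : ∀ x, ¬IsExternalPrivateNeighbor G S u x) {w : V} (huw : G.Adj u w) :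
    IsDominatingSet G (insert w (S.erase u)) := by
  intro v
  by_cases hvu : v = u
  · subst hvu
    exact Or.inr ⟨w, Finset.mem_insert_self _ _, huw.symm⟩
  · rcases hS.dominates_of_ne hno hvu with hv | ⟨s, hs, hsv⟩
    · exact Or.inl (Finset.mem_insert_of_mem hv)
    · exact Or.inr ⟨s, Finset.mem_insert_of_mem hs, hsv⟩

end Exchange

open Classical in
noncomputable def nonisolatedIn (G : SimpleGraph V) (S : Finset V) : Finset V :=
  S.filter fun y => ∃ z ∈ S, G.Adj y z

lemma card_nonisolatedIn_lt_insert_erase [DecidableEq V] {S : Finset V} {u w x : V}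
    (hu : ∀ z ∈ S, ¬G.Adj u z) (hw : w ∉ S) (hx : x ∈ S.erase u) (hwx : G.Adj w x) :
    (nonisolatedIn G S).card < (nonisolatedIn G (insert w (S.erase u))).card := by
  classical
  have hsub : insert w (nonisolatedIn G S) ⊆ nonisolatedIn G (insert w (S.erase u)) := by
    simp only [nonisolatedIn, Finset.insert_subset_iff, Finset.mem_filter]
    refine ⟨⟨Finset.mem_insert_self _ _, x, Finset.mem_insert_of_mem hx, hwx⟩, ?_⟩
    intro y hy
    obtain ⟨hy, z, hz, hyz⟩ := Finset.mem_filter.mp hy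
    have hyu : y ≠ u := by rintro rfl; exact hu z hz hyz
    have hzu : z ≠ u := by rintro rfl; exact hu y hy hyz.symm
    exact Finset.mem_filter.mpr ⟨Finset.mem_insert_of_mem (Finset.mem_erase.mpr ⟨hyu, hy⟩),
      z, Finset.mem_insert_of_mem (Finset.mem_erase.mpr ⟨hzu, hz⟩), hyz⟩
  have hw' : w ∉ nonisolatedIn G S := fun h => hw (Finset.mem_filter.mp h).1
  simpa [Finset.card_insert_of_notMem hw'] using Finset.card_le_card hsub

/-- Bollobás–Cockayne: among minimum dominating sets, one with the most vertices that have a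
neighbour inside the set works. -/
lemma exists_minimum_dominatingSet_forall_externalPrivateNeighbor [Fintype V]
    (hG : ∀ v, ∃ w, G.Adj v w) :
    ∃ S : Finset V, IsDominatingSet G S ∧ S.card = dominationNumber V G ∧
      ∀ u ∈ S, ∃ x, IsExternalPrivateNeighbor G S u x := by
  classical
  let minimum := Finset.univ.filter fun S : Finset V =>
    IsDominatingSet G S ∧ S.card = dominationNumber V G
  have hne : minimum.Nonempty :=
    let ⟨S, hS⟩ := exists_isDominatingSet_card_eq_dominationNumber (G := G)
    ⟨S, Finset.mem_filter.mpr ⟨Finset.mem_univ S, hS⟩⟩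
  obtain ⟨S, hSmin, hmax⟩ := minimum.exists_max_image (fun S => (nonisolatedIn G S).card) hne
  obtain ⟨hS, hScard⟩ := (Finset.mem_filter.mp hSmin).2
  refine ⟨S, hS, hScard, fun u hu => by_contra fun hno => ?_⟩
  push Not at hno
  by_cases hnbr : ∃ s ∈ S, G.Adj s u
  · obtain ⟨s, hs, hsu⟩ := hnbr
    have := dominationNumber_le_card (hS.erase hno hs hsu)
    rw [Finset.card_erase_of_mem hu] at this
    have := Finset.card_pos.mpr ⟨u, hu⟩
    omega
  push Not at hnbr
  have hiso : ∀ z ∈ S, ¬G.Adj u z := fun z hz h => hnbr z hz h.symm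
  obtain ⟨w, huw⟩ := hG u
  have hwS : w ∉ S := fun h => hiso w h huw
  obtain hw | ⟨x, hx, hxw⟩ := hS.dominates_of_ne hno (G.ne_of_adj huw).symm
  · exact hwS (Finset.mem_of_mem_erase hw)
  have hS' : insert w (S.erase u) ∈ minimum := by
    refine Finset.mem_filter.mpr ⟨Finset.mem_univ _, hS.insert_erase hno huw, ?_⟩
    rw [Finset.card_insert_of_notMem (fun h => hwS (Finset.mem_of_mem_erase h)),
      Finset.card_erase_of_mem hu, ← hScard, Nat.sub_add_cancel (Finset.card_pos.mpr ⟨u, hu⟩)]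
  exact (hmax _ hS').not_gt (card_nonisolatedIn_lt_insert_erase hiso hwS hx hxw.symm)

end

/-- For a finite connected simple graph `G` with at least two vertices,
the maximum number of edges in a saturated edge covering of `G` equals
`|V(G)| − γ(G)`. -/
theorem max_saturated_edge_covering (V : Type*) [Fintype V] (G : SimpleGraph V)
    (hconn : G.Connected) (hcard : 2 ≤ Fintype.card V) :
    sSup {k : ℕ | ∃ E' : Finset (Sym2 V), IsSaturatedEdgeCovering G E' ∧ E'.card = k} =
      Fintype.card V - dominationNumber V G := by
  have : Nontrivial V := Fintype.one_lt_card_iff_nontrivial.mp hcard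
  obtain ⟨S, hS, hScard, hpriv⟩ := exists_minimum_dominatingSet_forall_externalPrivateNeighbor
    hconn.preconnected.exists_adj_of_nontrivial
  obtain ⟨E₀, hE₀, hE₀card⟩ := hS.exists_saturatedEdgeCovering hpriv
  refine IsGreatest.csSup_eq ⟨⟨E₀, hE₀, hScard ▸ hE₀card⟩, ?_⟩
  rintro k ⟨E', hE', rfl⟩
  have := hE'.card_add_dominationNumber_le
  omega
end
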